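/- arXiv:math/0511690 — 2 statements merged into one kernel-verified Lean document; each statement's English description precedes it below -/
import Mathlib

section
/- Let Ω ⊂ ℝ^N be a bounded domain, f a continuous nonnegative function on the closure of Ω, λ > 0, and ε ∈ (0,1). Let u be a classical solution of (S)_λ which extends to a C¹ function on the closure of Ω, satisfies u ≤ 1 − (3/2)ε on Ω, and is strictly stable in the sense that there exists μ > 0 with ∫_Ω ‖∇φ‖² dx − ∫_Ω 2λ f(x) φ(x)²/(1−u(x))³ dx ≥ μ ∫_Ω φ² dx for every smooth function φ compactly supported in Ω. Define the energy E(v) = (1/2)∫_Ω ‖∇v‖² dx − λ ∫_Ω f(x)/(1−v(x)) dx. Then there exists δ > 0 such that for every smooth function φ compactly supported in Ω with sup_Ω |φ| + sup_Ω ‖∇φ‖ ≤ δ, one has E(u + φ) ≥ E(u), with strict inequality unless φ ≡ 0. -/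
open MeasureTheory Real Filter Topology
open Metric Set

noncomputable def lap {N : ℕ} (u : EuclideanSpace ℝ (Fin N) → ℝ) (x : EuclideanSpace ℝ (Fin N)) : ℝ :=
  ∑ i : Fin N, fderiv ℝ (fun y => fderiv ℝ u y (EuclideanSpace.single i 1)) x (EuclideanSpace.single i 1)

section Aux

variable {N : ℕ}

private lemma grad_apply (g : EuclideanSpace ℝ (Fin N) → ℝ) (x v : EuclideanSpace ℝ (Fin N)) :
    (inner ℝ (gradient g x) v : ℝ) = fderiv ℝ g x v :=
  InnerProductSpace.toDual_symm_apply

private lemma grad_norm (g : EuclideanSpace ℝ (Fin N) → ℝ) (x : EuclideanSpace ℝ (Fin N)) :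
    ‖gradient g x‖ = ‖fderiv ℝ g x‖ :=
  LinearIsometryEquiv.norm_map _ _

private lemma grad_comp (g : EuclideanSpace ℝ (Fin N) → ℝ) (x : EuclideanSpace ℝ (Fin N)) (i : Fin N) :
    gradient g x i = fderiv ℝ g x (EuclideanSpace.single i 1) := by
  rw [← grad_apply, real_inner_comm, EuclideanSpace.inner_single_left]
  simp

private lemma grad_inner (g h : EuclideanSpace ℝ (Fin N) → ℝ) (x : EuclideanSpace ℝ (Fin N)) :
    (inner ℝ (gradient g x) (gradient h x) : ℝ)
      = ∑ i, fderiv ℝ g x (EuclideanSpace.single i 1) * fderiv ℝ h x (EuclideanSpace.single i 1) := by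
  rw [PiLp.inner_apply]
  congr 1 with i
  simp [RCLike.inner_apply, grad_comp, mul_comm]

private lemma grad_zero_of_nmem (g : EuclideanSpace ℝ (Fin N) → ℝ) (x : EuclideanSpace ℝ (Fin N))
    (h : x ∉ tsupport g) : gradient g x = 0 := by
  have h0 : fderiv ℝ g x = 0 :=
    Function.notMem_support.1 fun hs => h (support_fderiv_subset ℝ hs)
  show (InnerProductSpace.toDual ℝ _).symm _ = 0
  rw [h0, map_zero]

private lemma grad_add (g h : EuclideanSpace ℝ (Fin N) → ℝ) (x : EuclideanSpace ℝ (Fin N))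
    (hg : DifferentiableAt ℝ g x) (hh : DifferentiableAt ℝ h x) :
    gradient (fun y => g y + h y) x = gradient g x + gradient h x := by
  show (InnerProductSpace.toDual ℝ _).symm _ = _
  rw [fderiv_fun_add hg hh, map_add]
  rfl

private lemma ev_zero {g : EuclideanSpace ℝ (Fin N) → ℝ} {x : EuclideanSpace ℝ (Fin N)}
    (h : x ∉ tsupport g) : g =ᶠ[nhds x] fun _ => 0 :=
  Filter.eventuallyEq_of_mem ((isClosed_tsupport g).isOpen_compl.mem_nhds h)
    fun _ hy => image_eq_zero_of_notMem_tsupport hy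

private lemma intOn {Ω : Set (EuclideanSpace ℝ (Fin N))} (hΩo : IsOpen Ω) (hvol : volume Ω < ⊤)
    {g : EuclideanSpace ℝ (Fin N) → ℝ} (hg : ContinuousOn g Ω) (C : ℝ)
    (hC : ∀ x ∈ Ω, |g x| ≤ C) : IntegrableOn g Ω := by
  refine ⟨hg.aestronglyMeasurable hΩo.measurableSet, HasFiniteIntegral.restrict_of_bounded (C := C) hvol ?_⟩
  exact (ae_restrict_iff' hΩo.measurableSet).2
    (Filter.Eventually.of_forall fun x hx => by simpa [Real.norm_eq_abs] using hC x hx)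

private lemma intOnK {Ω K : Set (EuclideanSpace ℝ (Fin N))} (hΩo : IsOpen Ω) (hvol : volume Ω < ⊤)
    (hKc : IsCompact K) {g : EuclideanSpace ℝ (Fin N) → ℝ} (hg : ContinuousOn g Ω) (hKΩ : K ⊆ Ω)
    (h0 : ∀ x ∉ K, g x = 0) : IntegrableOn g Ω := by
  obtain ⟨C, hC⟩ := hKc.exists_bound_of_continuousOn (hg.mono hKΩ)
  refine intOn hΩo hvol hg (max C 0) fun x hx => ?_
  by_cases hK : x ∈ K
  · exact le_trans (by simpa [Real.norm_eq_abs] using hC x hK) (le_max_left _ _)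
  · simp [h0 x hK]

private lemma expand_frac (f a b : ℝ) (ha : a ≠ 0) (hab : a - b ≠ 0) :
    f / (a - b) = f / a + (f * b / a ^ 2 + (f * b ^ 2 / a ^ 3 + f * b ^ 3 / ((a - b) * a ^ 3))) := by
  field_simp
  ring

end Aux

private lemma ev_zero' {α : Type*} [TopologicalSpace α] {g : α → ℝ} {x : α}
    (h : x ∉ tsupport g) : g =ᶠ[nhds x] fun _ => 0 :=
  Filter.eventuallyEq_of_mem ((isClosed_tsupport g).isOpen_compl.mem_nhds h)
    fun _ hy => image_eq_zero_of_notMem_tsupport hy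

private theorem div_int_zero {N : ℕ} (w : Fin N → EuclideanSpace ℝ (Fin N) → ℝ)
    (hwd : ∀ i x, DifferentiableAt ℝ (w i) x)
    (hws : ∀ i, HasCompactSupport (w i))
    (hInt : Integrable (fun x => ∑ i, fderiv ℝ (w i) x (EuclideanSpace.single i 1))) :
    ∫ x, ∑ i, fderiv ℝ (w i) x (EuclideanSpace.single i 1) = 0 := by
  cases N with
  | zero => simp
  | succ n =>
    set ψE : (Fin (n + 1) → ℝ) ≃L[ℝ] EuclideanSpace ℝ (Fin (n + 1)) :=
      (EuclideanSpace.equiv (Fin (n + 1)) ℝ).symm with hψE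
    set ψ : (Fin (n + 1) → ℝ) → EuclideanSpace ℝ (Fin (n + 1)) := ⇑ψE with hψ
    have hψm : ψ = ⇑(MeasurableEquiv.toLp 2 (Fin (n + 1) → ℝ)) := rfl
    have mp : MeasurePreserving ψ volume volume := by
      rw [hψm]; exact (EuclideanSpace.volume_preserving_symm_measurableEquiv_toLp (Fin (n + 1))).symm _
    have emb : MeasurableEmbedding ψ := by
      rw [hψm]; exact (MeasurableEquiv.toLp 2 (Fin (n + 1) → ℝ)).measurableEmbedding
    set g : Fin (n + 1) → (Fin (n + 1) → ℝ) → ℝ := fun i x => w i (ψ x) with hgdef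
    set g' : Fin (n + 1) → (Fin (n + 1) → ℝ) → (Fin (n + 1) → ℝ) →L[ℝ] ℝ :=
      fun i x => (fderiv ℝ (w i) (ψ x)).comp (ψE : (Fin (n + 1) → ℝ) →L[ℝ] _) with hg'def
    have hg : ∀ i x, HasFDerivAt (g i) (g' i x) x := fun i x =>
      ((hwd i (ψ x)).hasFDerivAt).comp x ψE.hasFDerivAt
    have hgs : ∀ i, HasCompactSupport (g i) := fun i =>
      (hws i).comp_homeomorph ψE.toHomeomorph
    have hKc : IsCompact (⋃ i, tsupport (g i)) := isCompact_iUnion fun i => hgs i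
    obtain ⟨R0, hR0⟩ := hKc.isBounded.subset_ball 0
    set R : ℝ := max R0 1 with hRdef
    have hRpos : (0:ℝ) < R := lt_of_lt_of_le one_pos (le_max_right _ _)
    have hR : ∀ i, tsupport (g i) ⊆ ball 0 R := fun i =>
      subset_trans (subset_iUnion (fun i => tsupport (g i)) i)
        (subset_trans hR0 (ball_subset_ball (le_max_left _ _)))
    set a : Fin (n + 1) → ℝ := fun _ => -R with hadef
    set b : Fin (n + 1) → ℝ := fun _ => R with hbdef
    have hab : a ≤ b := fun i => by simp [hadef, hbdef]; linarith
    -- vanishing of g i at points of norm ≥ R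
    have hvanish : ∀ (i : Fin (n + 1)) (y : Fin (n + 1) → ℝ), R ≤ ‖y‖ → g i y = 0 := by
      intro i y hy
      apply image_eq_zero_of_notMem_tsupport
      intro hmem
      have := hR i hmem
      rw [mem_ball, dist_zero_right] at this
      linarith
    -- the single vectors correspond
    have hsingle : ∀ i : Fin (n + 1), ψ (Pi.single i (1:ℝ)) = EuclideanSpace.single i 1 :=
      fun i => rfl
    have hDg : (fun x => ∑ i, (g' i x) (Pi.single i (1:ℝ)))
        = (fun y => ∑ i, fderiv ℝ (w i) y (EuclideanSpace.single i 1)) ∘ ψ := by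
      funext x
      simp only [Function.comp_apply, hg'def, ContinuousLinearMap.comp_apply]
      rfl
    have Hi : IntegrableOn (fun x => ∑ i, (g' i x) (Pi.single i (1:ℝ))) (Icc a b) volume := by
      rw [hDg]
      exact ((mp.integrable_comp_emb emb).2 hInt).integrableOn
    have key := MeasureTheory.integral_divergence_of_hasFDerivAt_off_countable' a b hab g g'
      ∅ countable_empty
      (fun i => Continuous.continuousOn (continuous_iff_continuousAt.2
        fun x => (hg i x).differentiableAt.continuousAt))
      (fun x _ i => hg i x) Hi
    -- faces vanish
    have hfaces : ∑ i : Fin (n + 1),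
        ((∫ x in Icc (a ∘ i.succAbove) (b ∘ i.succAbove), g i (i.insertNth (b i) x)) -
          ∫ x in Icc (a ∘ i.succAbove) (b ∘ i.succAbove), g i (i.insertNth (a i) x)) = 0 := by
      apply Finset.sum_eq_zero
      intro i _
      have h1 : ∀ x : Fin n → ℝ, g i (i.insertNth (b i) x) = 0 := by
        intro x
        set y : Fin (n + 1) → ℝ := i.insertNth (b i) x with hy
        apply hvanish
        have hyy : y i = b i := by simp [hy]
        calc R = |y i| := by rw [hyy]; simp [hbdef, abs_of_pos hRpos]
        _ ≤ ‖y‖ := by simpa [Real.norm_eq_abs] using norm_le_pi_norm y i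
      have h2 : ∀ x : Fin n → ℝ, g i (i.insertNth (a i) x) = 0 := by
        intro x
        set y : Fin (n + 1) → ℝ := i.insertNth (a i) x with hy
        apply hvanish
        have hyy : y i = a i := by simp [hy]
        calc R = |y i| := by rw [hyy]; simp [hadef, abs_of_pos hRpos]
        _ ≤ ‖y‖ := by simpa [Real.norm_eq_abs] using norm_le_pi_norm y i
      simp [h1, h2]
    rw [hfaces] at key
    -- divergence vanishes outside the box
    have hcompl : ∀ x ∉ Icc a b, ∑ i, (g' i x) (Pi.single i (1:ℝ)) = 0 := by
      intro x hx
      have hxnorm : R ≤ ‖x‖ := by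
        by_contra hlt
        push_neg at hlt
        apply hx
        rw [Set.mem_Icc]
        constructor <;> intro i <;>
          [skip; skip] <;>
          · have := norm_le_pi_norm x i
            have hxi := abs_le.1 (le_of_lt (lt_of_le_of_lt (le_trans (le_abs_self _)
              (by simpa [Real.norm_eq_abs] using norm_le_pi_norm x i)) hlt))
            simp [hadef, hbdef]
            linarith [hxi.1, hxi.2]
      apply Finset.sum_eq_zero
      intro i _
      have hnm : x ∉ tsupport (g i) := by
        intro hmem
        have := hR i hmem
        rw [mem_ball, dist_zero_right] at this
        linarith
      have h0 : fderiv ℝ (g i) x = 0 := by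
        rw [(ev_zero' hnm).fderiv_eq, fderiv_const_apply]
      have : g' i x = fderiv ℝ (g i) x := ((hg i x).fderiv).symm
      rw [this, h0]
      rfl
    calc ∫ x, ∑ i, fderiv ℝ (w i) x (EuclideanSpace.single i 1)
        = ∫ x, ((fun y => ∑ i, fderiv ℝ (w i) y (EuclideanSpace.single i 1)) ∘ ψ) x :=
          (mp.integral_comp emb _).symm
      _ = ∫ x, ∑ i, (g' i x) (Pi.single i (1:ℝ)) := by rw [hDg]
      _ = ∫ x in Icc a b, ∑ i, (g' i x) (Pi.single i (1:ℝ)) :=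
          (setIntegral_eq_integral_of_forall_compl_eq_zero hcompl).symm
      _ = 0 := by rw [key]

private theorem fderiv_bdd {N : ℕ} {Ω : Set (EuclideanSpace ℝ (Fin N))}
    (hΩo : IsOpen Ω) (hK : IsCompact (closure Ω)) {u : EuclideanSpace ℝ (Fin N) → ℝ}
    (huC1 : ContDiffOn ℝ 1 u (closure Ω)) :
    ∃ C : ℝ, ∀ x ∈ Ω, ‖fderiv ℝ u x‖ ≤ C := by
  have loc : ∀ x ∈ closure Ω, ∃ r > 0, ∃ C : ℝ, ∀ y ∈ Ω ∩ ball x r, ‖fderiv ℝ u y‖ ≤ C := by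
    intro x hx
    have hcd : ContDiffWithinAt ℝ ((0:ℕ) + 1) u (closure Ω) x := by
      have := huC1 x hx
      norm_num at this ⊢
      exact this
    obtain ⟨v, hv, -, f', hf'd, hf'c⟩ :=
      (contDiffWithinAt_succ_iff_hasFDerivWithinAt (by norm_num)).1 hcd
    rw [Set.insert_eq_self.2 hx] at hv
    obtain ⟨r2, hr2, hsub2⟩ := mem_nhdsWithin_iff.1 hv
    have hcw : ContinuousWithinAt f' v x := hf'c.continuousWithinAt
    have hball : f' ⁻¹' ball (f' x) 1 ∈ nhdsWithin x v :=
      hcw (Metric.ball_mem_nhds (f' x) one_pos)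
    obtain ⟨r1, hr1, hsub1⟩ := mem_nhdsWithin_iff.1 hball
    refine ⟨min r1 r2, lt_min hr1 hr2, ‖f' x‖ + 1, ?_⟩
    rintro y ⟨hyΩ, hyb⟩
    have hyb1 : y ∈ ball x r1 := ball_subset_ball (min_le_left _ _) hyb
    have hyb2 : y ∈ ball x r2 := ball_subset_ball (min_le_right _ _) hyb
    have hyv : y ∈ v := hsub2 ⟨hyb2, subset_closure hyΩ⟩
    have hUnhds : v ∈ nhds y := by
      refine Filter.mem_of_superset ((Metric.isOpen_ball.inter hΩo).mem_nhds ⟨hyb2, hyΩ⟩) ?_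
      intro z hz
      exact hsub2 ⟨hz.1, subset_closure hz.2⟩
    have hder : HasFDerivAt u (f' y) y := (hf'd y hyv).hasFDerivAt hUnhds
    rw [hder.fderiv]
    have hmem : f' y ∈ ball (f' x) 1 := hsub1 ⟨hyb1, hyv⟩
    have hdist : ‖f' y - f' x‖ < 1 := by
      have := mem_ball.1 hmem
      rwa [dist_eq_norm] at this
    have : ‖f' y‖ ≤ ‖f' x‖ + ‖f' y - f' x‖ := by
      simpa using norm_add_le (f' x) (f' y - f' x)
    linarith
  classical
  choose! r hr C hC using loc
  obtain ⟨t, ht⟩ := hK.elim_nhds_subcover' (fun x hx => ball x (r x))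
    (fun x hx => Metric.ball_mem_nhds x (hr x hx))
  refine ⟨∑ z ∈ t, |C ↑z|, ?_⟩
  intro y hy
  have hy' : y ∈ ⋃ x ∈ t, ball (↑x : EuclideanSpace ℝ (Fin N)) (r ↑x) := ht (subset_closure hy)
  obtain ⟨z, hzt, hzball⟩ := Set.mem_iUnion₂.1 hy'
  calc ‖fderiv ℝ u y‖ ≤ C ↑z := hC ↑z z.2 y ⟨hy, hzball⟩
  _ ≤ |C ↑z| := le_abs_self _
  _ ≤ ∑ z ∈ t, |C ↑z| := Finset.single_le_sum (f := fun z : ↥(closure Ω) => |C ↑z|) (fun i _ => abs_nonneg _) hzt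

private theorem byparts {N : ℕ} {Ω : Set (EuclideanSpace ℝ (Fin N))} (hΩo : IsOpen Ω)
    (hvol : volume Ω < ⊤) {u f φ : EuclideanSpace ℝ (Fin N) → ℝ} {lam : ℝ}
    (hu2 : ContDiffOn ℝ 2 u Ω)
    (hfΩ : ContinuousOn f Ω)
    (hA : ∀ x ∈ Ω, 0 < 1 - u x)
    (hpde : ∀ x ∈ Ω, -lap u x = lam * f x / (1 - u x) ^ 2)
    (hφd : Differentiable ℝ φ) (hφgc : Continuous fun x => fderiv ℝ φ x)
    (hφc : HasCompactSupport φ) (hφs : tsupport φ ⊆ Ω) :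
    ∫ x in Ω, (inner ℝ (gradient u x) (gradient φ x) : ℝ)
      = lam * ∫ x in Ω, f x * φ x / (1 - u x) ^ 2 := by
  classical
  set K := tsupport φ with hK
  have hKc : IsCompact K := hφc
  set e : Fin N → EuclideanSpace ℝ (Fin N) := fun i => EuclideanSpace.single i 1 with he
  set g : Fin N → EuclideanSpace ℝ (Fin N) → ℝ := fun i y => fderiv ℝ u y (e i) with hg
  set w : Fin N → EuclideanSpace ℝ (Fin N) → ℝ := fun i y => φ y * g i y with hw
  have huΩc : ContinuousOn u Ω := hu2.continuousOn
  have hfd1 : ContDiffOn ℝ 1 (fderiv ℝ u) Ω := hu2.fderiv_of_isOpen hΩo (by norm_num)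
  have hgd : ∀ i, ∀ x ∈ Ω, DifferentiableAt ℝ (g i) x := by
    intro i x hx
    have h1 : DifferentiableAt ℝ (fderiv ℝ u) x :=
      (hfd1.differentiableOn one_ne_zero).differentiableAt (hΩo.mem_nhds hx)
    exact h1.clm_apply (differentiableAt_const _)
  have hwd : ∀ i x, DifferentiableAt ℝ (w i) x := by
    intro i x
    by_cases hx : x ∈ Ω
    · exact (hφd x).mul (hgd i x hx)
    · have hxK : x ∉ K := fun h => hx (hφs h)
      have hev : w i =ᶠ[nhds x] fun _ => 0 := by
        refine Filter.eventuallyEq_of_mem ((isClosed_tsupport φ).isOpen_compl.mem_nhds hxK) ?_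
        intro y hy
        simp [hw, image_eq_zero_of_notMem_tsupport hy]
      exact hev.differentiableAt_iff.2 (differentiableAt_const 0)
  have hws : ∀ i, HasCompactSupport (w i) := by
    intro i
    apply IsCompact.of_isClosed_subset hφc (isClosed_tsupport _)
    apply closure_mono
    intro x hx
    simp only [hw, Function.mem_support] at hx
    exact fun h0 => hx (by rw [h0, zero_mul])
  set F : EuclideanSpace ℝ (Fin N) → ℝ :=
    fun x => (inner ℝ (gradient u x) (gradient φ x) : ℝ) - lam * (f x * φ x / (1 - u x) ^ 2)
    with hF
  have hdivΩ : ∀ x ∈ Ω, ∑ i, fderiv ℝ (w i) x (e i) = F x := by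
    intro x hx
    have hsum : ∀ i, fderiv ℝ (w i) x (e i)
        = φ x * fderiv ℝ (g i) x (e i) + g i x * fderiv ℝ φ x (e i) := by
      intro i
      rw [hw]
      rw [fderiv_fun_mul (hφd x) (hgd i x hx)]
      simp [smul_eq_mul]
    rw [Finset.sum_congr rfl fun i _ => hsum i, Finset.sum_add_distrib, ← Finset.mul_sum]
    have hlap : ∑ i, fderiv ℝ (g i) x (e i) = lap u x := rfl
    have hinner : ∑ i, g i x * fderiv ℝ φ x (e i)
        = (inner ℝ (gradient u x) (gradient φ x) : ℝ) := (grad_inner u φ x).symm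
    have hlapval : lap u x = -(lam * f x / (1 - u x) ^ 2) := by
      have := hpde x hx; linarith
    rw [hlap, hinner, hlapval, hF]
    ring
  have hdiv0 : ∀ x, x ∉ Ω → ∑ i, fderiv ℝ (w i) x (e i) = 0 := by
    intro x hx
    have hxK : x ∉ K := fun h => hx (hφs h)
    apply Finset.sum_eq_zero
    intro i _
    have hev : w i =ᶠ[nhds x] fun _ => 0 := by
      refine Filter.eventuallyEq_of_mem ((isClosed_tsupport φ).isOpen_compl.mem_nhds hxK) ?_
      intro y hy
      simp [hw, image_eq_zero_of_notMem_tsupport hy]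
    rw [hev.fderiv_eq, fderiv_const_apply]
    rfl
  have hdivind : (fun x => ∑ i, fderiv ℝ (w i) x (e i)) = Set.indicator Ω F := by
    funext x
    by_cases hx : x ∈ Ω
    · rw [Set.indicator_of_mem hx]; exact hdivΩ x hx
    · rw [Set.indicator_of_notMem hx]; exact hdiv0 x hx
  -- continuity of pieces on Ω
  have hgradu : ContinuousOn (gradient u) Ω := by
    exact (InnerProductSpace.toDual ℝ _).symm.continuous.comp_continuousOn
      (hu2.continuousOn_fderiv_of_isOpen hΩo (by norm_num))
  have hgradφ : Continuous (gradient φ) :=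
    (InnerProductSpace.toDual ℝ _).symm.continuous.comp hφgc
  have hIc : ContinuousOn (fun x => (inner ℝ (gradient u x) (gradient φ x) : ℝ)) Ω :=
    hgradu.inner hgradφ.continuousOn
  have hBc : ContinuousOn (fun x => lam * (f x * φ x / (1 - u x) ^ 2)) Ω := by
    apply ContinuousOn.mul continuousOn_const
    apply ContinuousOn.div (hfΩ.mul (hφd.continuous.continuousOn))
      ((continuousOn_const.sub huΩc).pow 2)
    intro x hx
    exact pow_ne_zero 2 (ne_of_gt (hA x hx))
  have hFc : ContinuousOn F Ω := hIc.sub hBc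
  -- vanishing off K
  have hI0 : ∀ x ∉ K, (inner ℝ (gradient u x) (gradient φ x) : ℝ) = 0 := by
    intro x hx
    rw [grad_zero_of_nmem φ x hx, inner_zero_right]
  have hB0 : ∀ x ∉ K, lam * (f x * φ x / (1 - u x) ^ 2) = 0 := by
    intro x hx
    rw [image_eq_zero_of_notMem_tsupport hx]
    ring
  have hIint : IntegrableOn (fun x => (inner ℝ (gradient u x) (gradient φ x) : ℝ)) Ω :=
    intOnK hΩo hvol hKc hIc hφs hI0
  have hBint : IntegrableOn (fun x => lam * (f x * φ x / (1 - u x) ^ 2)) Ω :=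
    intOnK hΩo hvol hKc hBc hφs hB0
  have hFint : IntegrableOn F Ω := hIint.sub hBint
  have hIntdiv : Integrable (fun x => ∑ i, fderiv ℝ (w i) x (e i)) := by
    rw [hdivind]
    exact (integrable_indicator_iff hΩo.measurableSet).2 hFint
  have hzero : ∫ x, ∑ i, fderiv ℝ (w i) x (e i) = 0 := div_int_zero w hwd hws hIntdiv
  have hFzero : ∫ x in Ω, F x = 0 := by
    rw [← integral_indicator hΩo.measurableSet, ← hdivind, hzero]
  have hsplit : ∫ x in Ω, F x
      = (∫ x in Ω, (inner ℝ (gradient u x) (gradient φ x) : ℝ))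
        - ∫ x in Ω, lam * (f x * φ x / (1 - u x) ^ 2) := integral_sub hIint hBint
  rw [hsplit] at hFzero
  rw [← integral_const_mul]
  linarith

/-- `u` is a classical solution of problem `(S)_lam` on `Ω` with permittivity profile `f`. -/
def IsSol {N : ℕ} (Ω : Set (EuclideanSpace ℝ (Fin N))) (f : EuclideanSpace ℝ (Fin N) → ℝ)
    (lam : ℝ) (u : EuclideanSpace ℝ (Fin N) → ℝ) : Prop :=
  ContDiffOn ℝ 2 u Ω ∧ ContinuousOn u (closure Ω) ∧
  (∀ x ∈ Ω, 0 ≤ u x ∧ u x < 1) ∧ (∀ x ∈ frontier Ω, u x = 0) ∧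
  ∀ x ∈ Ω, -lap u x = lam * f x / (1 - u x) ^ 2

/-- The energy functional associated to `(S)_λ`. -/
noncomputable def energy {N : ℕ} (Ω : Set (EuclideanSpace ℝ (Fin N)))
    (f : EuclideanSpace ℝ (Fin N) → ℝ) (lam : ℝ) (v : EuclideanSpace ℝ (Fin N) → ℝ) : ℝ :=
  (1 / 2) * (∫ x in Ω, ‖gradient v x‖ ^ 2) - lam * ∫ x in Ω, f x / (1 - v x)

/-- A strictly stable solution is a local minimum of the energy in the `C¹` topology. -/
theorem stmt10 (N : ℕ)
    (Ω : Set (EuclideanSpace ℝ (Fin N))) (hΩo : IsOpen Ω) (hΩb : Bornology.IsBounded Ω)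
    (f : EuclideanSpace ℝ (Fin N) → ℝ) (hf : ContinuousOn f (closure Ω))
    (hf0 : ∀ x ∈ closure Ω, 0 ≤ f x)
    (lam : ℝ) (hlam : 0 < lam) (ε : ℝ) (hε : 0 < ε) (hε1 : ε < 1)
    (u : EuclideanSpace ℝ (Fin N) → ℝ) (hu : IsSol Ω f lam u)
    (huC1 : ContDiffOn ℝ 1 u (closure Ω))
    (hub : ∀ x ∈ Ω, u x ≤ 1 - (3 / 2) * ε)
    (μ : ℝ) (hμ : 0 < μ)
    (hstab : ∀ φ : EuclideanSpace ℝ (Fin N) → ℝ,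
      ContDiff ℝ (⊤ : ℕ∞) φ → HasCompactSupport φ → tsupport φ ⊆ Ω →
      μ * ∫ x in Ω, φ x ^ 2 ≤
        (∫ x in Ω, ‖gradient φ x‖ ^ 2) - ∫ x in Ω, 2 * lam * f x * φ x ^ 2 / (1 - u x) ^ 3) :
    ∃ δ > 0, ∀ φ : EuclideanSpace ℝ (Fin N) → ℝ,
      ContDiff ℝ (⊤ : ℕ∞) φ → HasCompactSupport φ → tsupport φ ⊆ Ω →
      (⨆ x ∈ Ω, |φ x|) + (⨆ x ∈ Ω, ‖gradient φ x‖) ≤ δ →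
      energy Ω f lam u ≤ energy Ω f lam (fun x => u x + φ x) ∧
        (φ = 0 ∨ energy Ω f lam u < energy Ω f lam (fun x => u x + φ x)) := by
  obtain ⟨hu2, hucl, hu01, hubd, hpde⟩ := hu
  have hKcl : IsCompact (closure Ω) :=
    Metric.isCompact_of_isClosed_isBounded isClosed_closure hΩb.closure
  have hvol : volume Ω < ⊤ :=
    lt_of_le_of_lt (measure_mono subset_closure) hKcl.measure_lt_top
  obtain ⟨Mf, hMf⟩ := hKcl.exists_bound_of_continuousOn hf
  set M : ℝ := max Mf 0 with hMdef
  have hMnn : 0 ≤ M := le_max_right _ _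
  have hfM : ∀ x ∈ Ω, |f x| ≤ M := fun x hx =>
    le_trans (by simpa [Real.norm_eq_abs] using hMf x (subset_closure hx)) (le_max_left _ _)
  obtain ⟨Cu, hCu⟩ := fderiv_bdd hΩo hKcl huC1
  have h32 : (0:ℝ) < 3 * ε / 2 := by linarith
  set ε3 : ℝ := ε * (3 * ε / 2) ^ 3 with hε3def
  have hε3 : 0 < ε3 := mul_pos hε (pow_pos h32 3)
  have hM1 : (0:ℝ) < M + 1 := by linarith
  set δ : ℝ := min (ε / 2) (μ * ε3 / (4 * lam * (M + 1))) with hδdef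
  have hδpos : 0 < δ := lt_min (by linarith)
    (div_pos (mul_pos hμ hε3) (mul_pos (mul_pos (by norm_num) hlam) hM1))
  refine ⟨δ, hδpos, ?_⟩
  intro φ hφ hφc hφs hφδ
  have hA : ∀ x ∈ Ω, 3 * ε / 2 ≤ 1 - u x := fun x hx => by linarith [hub x hx]
  have hA0 : ∀ x ∈ Ω, 0 < 1 - u x := fun x hx => lt_of_lt_of_le h32 (hA x hx)
  have hφcont : Continuous φ := hφ.continuous
  have hφd : Differentiable ℝ φ := hφ.differentiable (by simp)
  obtain ⟨B, hB⟩ := hφc.exists_bound_of_continuous hφcont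
  have hbdd : BddAbove (Set.range fun x => ⨆ _ : x ∈ Ω, |φ x|) := by
    refine ⟨max B 0, ?_⟩
    rintro y ⟨x, rfl⟩
    by_cases hx : x ∈ Ω
    · exact le_of_le_of_eq (le_of_eq (ciSup_pos hx)) rfl |>.trans
        (le_trans (by simpa [Real.norm_eq_abs] using hB x) (le_max_left _ _))
    · have : IsEmpty (x ∈ Ω) := ⟨hx⟩
      exact le_of_eq (Real.iSup_of_isEmpty _) |>.trans (le_max_right _ _)
  have hφx : ∀ x ∈ Ω, |φ x| ≤ δ := by
    intro x hx
    have h1 : |φ x| ≤ ⨆ x ∈ Ω, |φ x| := by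
      have h := le_ciSup hbdd x
      exact le_trans (le_of_eq (ciSup_pos (f := fun _ : x ∈ Ω => |φ x|) hx).symm) h
    have h2 : 0 ≤ ⨆ x ∈ Ω, ‖gradient φ x‖ :=
      Real.iSup_nonneg fun x => Real.iSup_nonneg fun _ => norm_nonneg _
    linarith
  have hδε : δ ≤ ε / 2 := min_le_left _ _
  have hB2 : ∀ x ∈ Ω, ε ≤ 1 - u x - φ x := by
    intro x hx
    have h1 := abs_le.1 (hφx x hx)
    have h2 := hA x hx
    linarith [h1.2]
  have huΩc : ContinuousOn u Ω := hu2.continuousOn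
  have hfΩ : ContinuousOn f Ω := hf.mono subset_closure
  have hgradu : ContinuousOn (gradient u) Ω :=
    (InnerProductSpace.toDual ℝ _).symm.continuous.comp_continuousOn
      (hu2.continuousOn_fderiv_of_isOpen hΩo (by norm_num))
  have hφgc : Continuous fun x => fderiv ℝ φ x := hφ.continuous_fderiv (by simp)
  have hgradφ : Continuous (gradient φ) :=
    (InnerProductSpace.toDual ℝ _).symm.continuous.comp hφgc
  have hgraduB : ∀ x ∈ Ω, ‖gradient u x‖ ≤ Cu := fun x hx => by
    rw [grad_norm]; exact hCu x hx
  have hud : ∀ x ∈ Ω, DifferentiableAt ℝ u x := fun x hx =>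
    (hu2.contDiffAt (hΩo.mem_nhds hx)).differentiableAt (by norm_num)
  have hKc : IsCompact (tsupport φ) := hφc
  have hmeas := hΩo.measurableSet
  have hφ0 : ∀ x ∉ tsupport φ, φ x = 0 := fun x hx => image_eq_zero_of_notMem_tsupport hx
  have hgφ0 : ∀ x ∉ tsupport φ, gradient φ x = 0 := fun x hx => grad_zero_of_nmem φ x hx
  -- integrability of all pieces
  have I1 : IntegrableOn (fun x => ‖gradient u x‖ ^ 2) Ω := by
    apply intOn hΩo hvol (hgradu.norm.pow 2) (Cu ^ 2)
    intro x hx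
    rw [abs_of_nonneg (sq_nonneg _)]
    exact pow_le_pow_left₀ (norm_nonneg _) (hgraduB x hx) 2
  have I2 : IntegrableOn (fun x => ‖gradient φ x‖ ^ 2) Ω :=
    intOnK hΩo hvol hKc ((hgradφ.norm.pow 2).continuousOn) hφs
      (fun x hx => by rw [hgφ0 x hx]; simp)
  have I3 : IntegrableOn (fun x => (inner ℝ (gradient u x) (gradient φ x) : ℝ)) Ω :=
    intOnK hΩo hvol hKc (hgradu.inner hgradφ.continuousOn) hφs
      (fun x hx => by rw [hgφ0 x hx, inner_zero_right])
  have hsub1 : ContinuousOn (fun x => 1 - u x) Ω := continuousOn_const.sub huΩc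
  have I4 : IntegrableOn (fun x => f x / (1 - u x)) Ω := by
    apply intOn hΩo hvol (hfΩ.div hsub1 fun x hx => ne_of_gt (hA0 x hx)) (M / (3 * ε / 2))
    intro x hx
    show |f x / (1 - u x)| ≤ M / (3 * ε / 2)
    rw [abs_div, abs_of_pos (hA0 x hx)]
    exact div_le_div₀ hMnn (hfM x hx) h32 (hA x hx)
  have I5 : IntegrableOn (fun x => f x / (1 - (u x + φ x))) Ω := by
    have hpos : ∀ x ∈ Ω, 0 < 1 - (u x + φ x) := fun x hx => by
      have := hB2 x hx; linarith
    apply intOn hΩo hvol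
      (hfΩ.div (continuousOn_const.sub (huΩc.add hφcont.continuousOn))
        fun x hx => ne_of_gt (hpos x hx)) (M / ε)
    intro x hx
    show |f x / (1 - (u x + φ x))| ≤ M / ε
    rw [abs_div, abs_of_pos (hpos x hx)]
    exact div_le_div₀ hMnn (hfM x hx) hε (by have := hB2 x hx; linarith)
  have I6 : IntegrableOn (fun x => f x * φ x / (1 - u x) ^ 2) Ω := by
    apply intOnK hΩo hvol hKc
      ((hfΩ.mul hφcont.continuousOn).div (hsub1.pow 2)
        fun x hx => pow_ne_zero 2 (ne_of_gt (hA0 x hx))) hφs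
    intro x hx
    show f x * φ x / (1 - u x) ^ 2 = 0
    rw [hφ0 x hx]
    simp
  have I7 : IntegrableOn (fun x => f x * φ x ^ 2 / (1 - u x) ^ 3) Ω := by
    apply intOnK hΩo hvol hKc
      ((hfΩ.mul (hφcont.pow 2).continuousOn).div (hsub1.pow 3)
        fun x hx => pow_ne_zero 3 (ne_of_gt (hA0 x hx))) hφs
    intro x hx
    show f x * φ x ^ 2 / (1 - u x) ^ 3 = 0
    rw [hφ0 x hx]
    simp
  have I8 : IntegrableOn (fun x => f x * φ x ^ 3 / ((1 - u x - φ x) * (1 - u x) ^ 3)) Ω := by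
    apply intOnK hΩo hvol hKc
      ((hfΩ.mul (hφcont.pow 3).continuousOn).div
        (((continuousOn_const.sub huΩc).sub hφcont.continuousOn).mul (hsub1.pow 3))
        fun x hx => mul_ne_zero (ne_of_gt (lt_of_lt_of_le hε (hB2 x hx)))
          (pow_ne_zero 3 (ne_of_gt (hA0 x hx)))) hφs
    intro x hx
    show f x * φ x ^ 3 / ((1 - u x - φ x) * (1 - u x) ^ 3) = 0
    rw [hφ0 x hx]
    simp
  have I9 : IntegrableOn (fun x => φ x ^ 2) Ω :=
    intOnK hΩo hvol hKc ((hφcont.pow 2).continuousOn) hφs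
      (fun x hx => by rw [hφ0 x hx]; ring)
  set Gu := ∫ x in Ω, ‖gradient u x‖ ^ 2 with hGu
  set Gφ := ∫ x in Ω, ‖gradient φ x‖ ^ 2 with hGφ
  set X := ∫ x in Ω, (inner ℝ (gradient u x) (gradient φ x) : ℝ) with hX
  set P1 := ∫ x in Ω, f x / (1 - u x) with hP1
  set P2 := ∫ x in Ω, f x * φ x / (1 - u x) ^ 2 with hP2
  set P3 := ∫ x in Ω, f x * φ x ^ 2 / (1 - u x) ^ 3 with hP3
  set P4 := ∫ x in Ω, f x * φ x ^ 3 / ((1 - u x - φ x) * (1 - u x) ^ 3) with hP4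
  set Q := ∫ x in Ω, φ x ^ 2 with hQ
  have hgradsum : ∫ x in Ω, ‖gradient (fun y => u y + φ y) x‖ ^ 2 = Gu + (2 * X + Gφ) := by
    have hpt : Set.EqOn (fun x => ‖gradient (fun y => u y + φ y) x‖ ^ 2)
        (fun x => ‖gradient u x‖ ^ 2
          + (2 * (inner ℝ (gradient u x) (gradient φ x) : ℝ) + ‖gradient φ x‖ ^ 2)) Ω := by
      intro x hx
      simp only
      rw [grad_add u φ x (hud x hx) (hφd x), norm_add_sq_real]
      ring
    have e1 : IntegrableOn
        (fun x => 2 * (inner ℝ (gradient u x) (gradient φ x) : ℝ) + ‖gradient φ x‖ ^ 2) Ω :=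
      (I3.const_mul 2).add I2
    have e2 : ∫ x in Ω, (‖gradient u x‖ ^ 2
        + (2 * (inner ℝ (gradient u x) (gradient φ x) : ℝ) + ‖gradient φ x‖ ^ 2))
        = Gu + ∫ x in Ω, (2 * (inner ℝ (gradient u x) (gradient φ x) : ℝ) + ‖gradient φ x‖ ^ 2) :=
      integral_add I1 e1
    have e3 : ∫ x in Ω, (2 * (inner ℝ (gradient u x) (gradient φ x) : ℝ) + ‖gradient φ x‖ ^ 2)
        = (∫ x in Ω, 2 * (inner ℝ (gradient u x) (gradient φ x) : ℝ)) + Gφ :=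
      integral_add (I3.const_mul 2) I2
    have e4 : ∫ x in Ω, 2 * (inner ℝ (gradient u x) (gradient φ x) : ℝ) = 2 * X :=
      integral_const_mul 2 _
    rw [setIntegral_congr_fun hmeas hpt, e2, e3, e4]
  have hnl : ∫ x in Ω, f x / (1 - (u x + φ x)) = P1 + (P2 + (P3 + P4)) := by
    have hpt : Set.EqOn (fun x => f x / (1 - (u x + φ x)))
        (fun x => f x / (1 - u x) + (f x * φ x / (1 - u x) ^ 2 +
          (f x * φ x ^ 2 / (1 - u x) ^ 3
            + f x * φ x ^ 3 / ((1 - u x - φ x) * (1 - u x) ^ 3)))) Ω := by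
      intro x hx
      simp only
      have h1 : (1:ℝ) - (u x + φ x) = (1 - u x) - φ x := by ring
      rw [h1, expand_frac (f x) (1 - u x) (φ x) (ne_of_gt (hA0 x hx))
        (ne_of_gt (lt_of_lt_of_le hε (hB2 x hx)))]
    have e1 : IntegrableOn (fun x => f x * φ x ^ 2 / (1 - u x) ^ 3
        + f x * φ x ^ 3 / ((1 - u x - φ x) * (1 - u x) ^ 3)) Ω := I7.add I8
    have e0 : IntegrableOn (fun x => f x * φ x / (1 - u x) ^ 2
        + (f x * φ x ^ 2 / (1 - u x) ^ 3
          + f x * φ x ^ 3 / ((1 - u x - φ x) * (1 - u x) ^ 3))) Ω := I6.add e1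
    have e2 : ∫ x in Ω, (f x / (1 - u x) + (f x * φ x / (1 - u x) ^ 2
        + (f x * φ x ^ 2 / (1 - u x) ^ 3
          + f x * φ x ^ 3 / ((1 - u x - φ x) * (1 - u x) ^ 3))))
        = P1 + ∫ x in Ω, (f x * φ x / (1 - u x) ^ 2
          + (f x * φ x ^ 2 / (1 - u x) ^ 3
            + f x * φ x ^ 3 / ((1 - u x - φ x) * (1 - u x) ^ 3))) := integral_add I4 e0
    have e3 : ∫ x in Ω, (f x * φ x / (1 - u x) ^ 2
        + (f x * φ x ^ 2 / (1 - u x) ^ 3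
          + f x * φ x ^ 3 / ((1 - u x - φ x) * (1 - u x) ^ 3)))
        = P2 + ∫ x in Ω, (f x * φ x ^ 2 / (1 - u x) ^ 3
          + f x * φ x ^ 3 / ((1 - u x - φ x) * (1 - u x) ^ 3)) := integral_add I6 e1
    have e4 : ∫ x in Ω, (f x * φ x ^ 2 / (1 - u x) ^ 3
        + f x * φ x ^ 3 / ((1 - u x - φ x) * (1 - u x) ^ 3)) = P3 + P4 := integral_add I7 I8
    rw [setIntegral_congr_fun hmeas hpt, e2, e3, e4]
  have hbp : X = lam * P2 := byparts hΩo hvol hu2 hfΩ hA0 hpde hφd hφgc hφc hφs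
  have hst0 := hstab φ hφ hφc hφs
  have hst1 : ∫ x in Ω, 2 * lam * f x * φ x ^ 2 / (1 - u x) ^ 3 = 2 * lam * P3 := by
    rw [hP3, ← integral_const_mul]
    apply setIntegral_congr_fun hmeas
    intro x hx
    simp only
    ring
  rw [hst1] at hst0
  have hQ0 : 0 ≤ Q := setIntegral_nonneg hmeas fun x _ => sq_nonneg _
  have hc : lam * ((M + 1) * δ / ε3) ≤ μ / 4 := by
    have hδ2 : δ ≤ μ * ε3 / (4 * lam * (M + 1)) := min_le_right _ _
    calc lam * ((M + 1) * δ / ε3) = lam * (M + 1) * δ / ε3 := by ring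
    _ ≤ lam * (M + 1) * (μ * ε3 / (4 * lam * (M + 1))) / ε3 := by gcongr
    _ = μ / 4 := by field_simp
  have hg5bd : ∀ x ∈ Ω,
      |f x * φ x ^ 3 / ((1 - u x - φ x) * (1 - u x) ^ 3)| ≤ (M + 1) * δ / ε3 * φ x ^ 2 := by
    intro x hx
    have hax := hA x hx
    have hbx := hB2 x hx
    have hden : ε3 ≤ (1 - u x - φ x) * (1 - u x) ^ 3 := by
      rw [hε3def]
      exact mul_le_mul hbx (pow_le_pow_left₀ (le_of_lt h32) hax 3)
        (le_of_lt (pow_pos h32 3)) (by linarith)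
    have hdenpos : 0 < (1 - u x - φ x) * (1 - u x) ^ 3 := lt_of_lt_of_le hε3 hden
    rw [abs_div, abs_of_pos hdenpos, abs_mul, abs_pow]
    have hnum : |f x| * |φ x| ^ 3 ≤ (M + 1) * (δ * φ x ^ 2) := by
      calc |f x| * |φ x| ^ 3 = |f x| * (φ x ^ 2 * |φ x|) := by rw [pow_succ, sq_abs]
      _ ≤ (M + 1) * (φ x ^ 2 * δ) := by
          apply mul_le_mul (le_trans (hfM x hx) (by linarith))
            (mul_le_mul_of_nonneg_left (hφx x hx) (sq_nonneg _))
            (by positivity) (by linarith)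
      _ = (M + 1) * (δ * φ x ^ 2) := by ring
    calc |f x| * |φ x| ^ 3 / ((1 - u x - φ x) * (1 - u x) ^ 3)
        ≤ (M + 1) * (δ * φ x ^ 2) / ε3 := div_le_div₀ (by positivity) hnum hε3 hden
    _ = (M + 1) * δ / ε3 * φ x ^ 2 := by ring
  have hP4b : |P4| ≤ (M + 1) * δ / ε3 * Q := by
    calc |P4| ≤ ∫ x in Ω, |f x * φ x ^ 3 / ((1 - u x - φ x) * (1 - u x) ^ 3)| := by
          rw [hP4]
          exact
            norm_integral_le_integral_norm (μ := volume.restrict Ω)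
              (fun x => f x * φ x ^ 3 / ((1 - u x - φ x) * (1 - u x) ^ 3))
    _ ≤ ∫ x in Ω, (M + 1) * δ / ε3 * φ x ^ 2 :=
          setIntegral_mono_on I8.abs (I9.const_mul _) hmeas hg5bd
    _ = (M + 1) * δ / ε3 * Q := by rw [hQ, integral_const_mul]
  have hP4' : |lam * P4| ≤ μ / 4 * Q := by
    rw [abs_mul, abs_of_pos hlam]
    calc lam * |P4| ≤ lam * ((M + 1) * δ / ε3 * Q) :=
          mul_le_mul_of_nonneg_left hP4b (le_of_lt hlam)
    _ = lam * ((M + 1) * δ / ε3) * Q := by ring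
    _ ≤ μ / 4 * Q := mul_le_mul_of_nonneg_right hc hQ0
  have habs := abs_le.1 hP4'
  have hE0 : energy Ω f lam u = 1 / 2 * Gu - lam * P1 := rfl
  have hE1 : energy Ω f lam (fun x => u x + φ x)
      = 1 / 2 * (Gu + (2 * X + Gφ)) - lam * (P1 + (P2 + (P3 + P4))) := by
    show (1 / 2 : ℝ) * (∫ x in Ω, ‖gradient (fun y => u y + φ y) x‖ ^ 2)
        - lam * ∫ x in Ω, f x / (1 - (u x + φ x)) = _
    rw [hgradsum, hnl]
  constructor
  · rw [hE0, hE1]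
    linarith [hst0, hbp, habs.1, habs.2, hQ0]
  · by_cases hφzero : φ = 0
    · exact Or.inl hφzero
    · right
      have hQpos : 0 < Q := by
        obtain ⟨x0, hx0⟩ := Function.ne_iff.1 hφzero
        have hsupp : Function.support (fun x => φ x ^ 2) = Function.support φ := by
          ext x; simp [pow_eq_zero_iff]
        rw [hQ]
        rw [integral_pos_iff_support_of_nonneg (fun x => sq_nonneg (φ x)) I9]
        rw [hsupp, Measure.restrict_apply hφcont.isOpen_support.measurableSet,
          Set.inter_eq_self_of_subset_left (subset_trans (subset_tsupport φ) hφs)]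
        exact IsOpen.measure_pos volume hφcont.isOpen_support ⟨x0, hx0⟩
      rw [hE0, hE1]
      have h4 : 0 < μ / 4 * Q := mul_pos (by linarith) hQpos
      linarith [hst0, hbp, habs.1, habs.2]
end

section
/- Let Ω ⊂ ℝ^N be a bounded domain, f a continuous nonnegative function on the closure of Ω, and λ ≥ 0. For ε ∈ (0,1) define ψ_ε(t) = 1 − (ε + (1−ε)(1−t)³)^{1/3} for t ∈ [0,1]. If u is a classical solution of (S)_λ, then the function v = ψ_ε ∘ u satisfies: 0 ≤ v(x) ≤ 1 − ε^{1/3} for all x in Ω, v = 0 on ∂Ω, and −Δv(x) ≥ (1−ε) λ f(x)/(1−v(x))² for every x ∈ Ω; that is, v is a classical supersolution of (S)_{(1−ε)λ} bounded away from 1. -/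
/-!
Write `ψ = ψ_ε`. Since `(1 - ψ t) ^ 3 = ε + (1 - ε) (1 - t) ^ 3`, differentiation gives
`ψ' t * (1 - ψ t) ^ 2 = (1 - ε) (1 - t) ^ 2`, and `ψ'' ≤ 0` on `[0, 1]`. The chain rule
`Δ (ψ ∘ u) = ψ'(u) Δu + ψ''(u) |∇u|²` then yields
`-Δv ≥ ψ'(u) (-Δu) = ψ'(u) λ f / (1 - u)² = (1 - ε) λ f / (1 - v)²`.
The bounds on `v` follow from `ε ≤ (1 - v) ^ 3 ≤ 1`.
-/

open MeasureTheory Real Filter Topology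

theorem lap_comp {N : ℕ} {u : EuclideanSpace ℝ (Fin N) → ℝ} {x : EuclideanSpace ℝ (Fin N)}
    (hu : ContDiffAt ℝ 2 u x) {φ φ' : ℝ → ℝ} {φ'' : ℝ}
    (hφ : ∀ᶠ t in 𝓝 (u x), HasDerivAt φ (φ' t) t) (hφ' : HasDerivAt φ' φ'' (u x)) :
    lap (φ ∘ u) x =
      φ' (u x) * lap u x + φ'' * ∑ i : Fin N, fderiv ℝ u x (EuclideanSpace.single i 1) ^ 2 := by
  have hu_diff : ∀ᶠ y in 𝓝 x, HasFDerivAt u (fderiv ℝ u y) y :=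
    (hu.eventually (by simp)).mono fun y hy =>
      (hy.differentiableAt (by norm_num)).hasFDerivAt
  have hcomp : ∀ᶠ y in 𝓝 x, fderiv ℝ (φ ∘ u) y = φ' (u y) • fderiv ℝ u y := by
    filter_upwards [hu_diff, hu.continuousAt.preimage_mem_nhds hφ] with y hy hφy
    exact (hφy.comp_hasFDerivAt y hy).fderiv
  have hsecond : ∀ i : Fin N, HasFDerivAt (fun y => fderiv ℝ u y (EuclideanSpace.single i 1))
      (fderiv ℝ (fun y => fderiv ℝ u y (EuclideanSpace.single i 1)) x) x := fun i =>
    (((hu.fderiv_right le_rfl).clm_apply contDiffAt_const).differentiableAt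
      one_ne_zero).hasFDerivAt
  have hterm : ∀ i : Fin N,
      fderiv ℝ (fun y => fderiv ℝ (φ ∘ u) y (EuclideanSpace.single i 1)) x
        (EuclideanSpace.single i 1) =
      φ' (u x) * fderiv ℝ (fun y => fderiv ℝ u y (EuclideanSpace.single i 1)) x
        (EuclideanSpace.single i 1) + φ'' * fderiv ℝ u x (EuclideanSpace.single i 1) ^ 2 := by
    intro i
    have heq : (fun y => fderiv ℝ (φ ∘ u) y (EuclideanSpace.single i 1)) =ᶠ[𝓝 x]
        fun y => φ' (u y) * fderiv ℝ u y (EuclideanSpace.single i 1) :=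
      hcomp.mono fun y hy => by simp [hy]
    have hcoeff : HasFDerivAt (fun y => φ' (u y)) (φ'' • fderiv ℝ u x) x :=
      hφ'.comp_hasFDerivAt x hu_diff.self_of_nhds
    rw [heq.fderiv_eq, (hcoeff.fun_mul (hsecond i)).fderiv]
    simp only [add_apply, smul_apply, smul_eq_mul]
    ring
  simp only [lap, hterm, Finset.sum_add_distrib, ← Finset.mul_sum]

theorem mul_neg_lap_le_neg_lap_comp {N : ℕ} {u : EuclideanSpace ℝ (Fin N) → ℝ}
    {x : EuclideanSpace ℝ (Fin N)} (hu : ContDiffAt ℝ 2 u x) {φ φ' : ℝ → ℝ} {φ'' : ℝ}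
    (hφ : ∀ᶠ t in 𝓝 (u x), HasDerivAt φ (φ' t) t) (hφ' : HasDerivAt φ' φ'' (u x))
    (hφ'' : φ'' ≤ 0) :
    φ' (u x) * -lap u x ≤ -lap (φ ∘ u) x := by
  have hgrad : 0 ≤ ∑ i : Fin N, fderiv ℝ u x (EuclideanSpace.single i 1) ^ 2 :=
    Finset.sum_nonneg fun i _ => sq_nonneg _
  rw [lap_comp hu hφ hφ']
  linarith [mul_nonpos_of_nonpos_of_nonneg hφ'' hgrad]

namespace ConcaveTruncation

variable (ε : ℝ)

noncomputable def blend (t : ℝ) : ℝ := ε + (1 - ε) * (1 - t) ^ 3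

noncomputable def psi (t : ℝ) : ℝ := 1 - blend ε t ^ ((1 : ℝ) / 3)

noncomputable def psiDeriv (t : ℝ) : ℝ := (1 - ε) * (1 - t) ^ 2 * blend ε t ^ (-(2 : ℝ) / 3)

noncomputable def psiDeriv2 (t : ℝ) : ℝ :=
  -2 * ε * (1 - ε) * (1 - t) * blend ε t ^ (-(5 : ℝ) / 3)

variable {ε}

theorem blend_le_one (hε1 : ε ≤ 1) {t : ℝ} (ht0 : 0 ≤ t) (ht1 : t ≤ 1) : blend ε t ≤ 1 := by
  have : (1 - t) ^ 3 ≤ 1 := pow_le_one₀ (by linarith) (by linarith)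
  unfold blend
  nlinarith

theorem le_blend (hε1 : ε ≤ 1) {t : ℝ} (ht : t ≤ 1) : ε ≤ blend ε t := by
  have : 0 ≤ (1 - ε) * (1 - t) ^ 3 := mul_nonneg (by linarith) (pow_nonneg (by linarith) 3)
  unfold blend
  linarith

theorem hasDerivAt_blend (t : ℝ) : HasDerivAt (blend ε) (-(3 * (1 - ε) * (1 - t) ^ 2)) t := by
  have h := ((((hasDerivAt_id' t).const_sub 1).pow 3).const_mul (1 - ε)).const_add ε
  exact h.congr_deriv (by ring)

theorem hasDerivAt_psi {t : ℝ} (ht : 0 < blend ε t) : HasDerivAt (psi ε) (psiDeriv ε t) t := by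
  have h := ((hasDerivAt_rpow_const (p := (1 : ℝ) / 3) (Or.inl ht.ne')).comp t
    (hasDerivAt_blend t)).const_sub 1
  refine h.congr_deriv ?_
  rw [show (1 : ℝ) / 3 - 1 = -(2 : ℝ) / 3 by norm_num, psiDeriv]
  ring

theorem hasDerivAt_psiDeriv {t : ℝ} (ht : 0 < blend ε t) :
    HasDerivAt (psiDeriv ε) (psiDeriv2 ε t) t := by
  have hsq : HasDerivAt (fun s : ℝ => (1 - ε) * (1 - s) ^ 2) ((1 - ε) * (2 * (1 - t) ^ 1 * -1)) t :=
    (((hasDerivAt_id t).const_sub 1).pow 2).const_mul (1 - ε)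
  have hpow := (hasDerivAt_rpow_const (p := -(2 : ℝ) / 3) (Or.inl ht.ne')).comp t
    (hasDerivAt_blend t)
  have hsplit : blend ε t ^ (-(2 : ℝ) / 3) = blend ε t * blend ε t ^ (-(5 : ℝ) / 3) := by
    rw [show -(2 : ℝ) / 3 = 1 + -(5 : ℝ) / 3 by norm_num, rpow_add ht, rpow_one]
  refine (hsq.mul hpow).congr_deriv ?_
  rw [Function.comp_apply, show -(2 : ℝ) / 3 - 1 = -(5 : ℝ) / 3 by norm_num, hsplit, psiDeriv2,
    blend]
  ring

theorem psiDeriv2_nonpos (hε : 0 ≤ ε) (hε1 : ε ≤ 1) {t : ℝ} (ht : t ≤ 1) : psiDeriv2 ε t ≤ 0 := by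
  have : 0 ≤ 2 * ε * (1 - ε) * (1 - t) * blend ε t ^ (-(5 : ℝ) / 3) := by
    have := rpow_nonneg (hε.trans (le_blend hε1 ht)) (-(5 : ℝ) / 3)
    have : 0 ≤ 1 - ε := by linarith
    have : 0 ≤ 1 - t := by linarith
    positivity
  unfold psiDeriv2
  linarith

theorem one_sub_psi_sq {t : ℝ} (ht : 0 ≤ blend ε t) :
    (1 - psi ε t) ^ 2 = blend ε t ^ ((2 : ℝ) / 3) := by
  rw [psi, sub_sub_cancel, ← rpow_natCast, ← rpow_mul ht]
  norm_num

theorem psiDeriv_mul_one_sub_psi_sq {t : ℝ} (ht : 0 < blend ε t) :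
    psiDeriv ε t * (1 - psi ε t) ^ 2 = (1 - ε) * (1 - t) ^ 2 := by
  rw [one_sub_psi_sq ht.le, psiDeriv, mul_assoc, ← rpow_add ht]
  norm_num

theorem div_one_sub_psi_sq (c : ℝ) {t : ℝ} (hb : 0 < blend ε t) (ht : t < 1) :
    (1 - ε) * c / (1 - psi ε t) ^ 2 = psiDeriv ε t * (c / (1 - t) ^ 2) := by
  have hpsi : (1 - psi ε t) ^ 2 ≠ 0 := by
    rw [one_sub_psi_sq hb.le]
    exact (rpow_pos_of_pos hb _).ne'
  have ht' : 1 - t ≠ 0 := sub_ne_zero.2 ht.ne'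
  rw [div_eq_iff hpsi, mul_comm (psiDeriv ε t), mul_assoc, psiDeriv_mul_one_sub_psi_sq hb]
  field_simp

theorem psi_nonneg (hε : 0 ≤ ε) (hε1 : ε ≤ 1) {t : ℝ} (ht0 : 0 ≤ t) (ht1 : t ≤ 1) :
    0 ≤ psi ε t := by
  have := rpow_le_one (hε.trans (le_blend hε1 ht1)) (blend_le_one hε1 ht0 ht1)
    (by norm_num : (0 : ℝ) ≤ 1 / 3)
  unfold psi
  linarith

theorem psi_le (hε : 0 ≤ ε) (hε1 : ε ≤ 1) {t : ℝ} (ht : t ≤ 1) :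
    psi ε t ≤ 1 - ε ^ ((1 : ℝ) / 3) := by
  have := rpow_le_rpow hε (le_blend hε1 ht) (by norm_num : (0 : ℝ) ≤ 1 / 3)
  unfold psi
  linarith

theorem psi_zero : psi ε 0 = 0 := by
  simp [psi, blend]

end ConcaveTruncation

open ConcaveTruncation

theorem stmt11_general (N : ℕ)
    (Ω : Set (EuclideanSpace ℝ (Fin N))) (hΩo : IsOpen Ω)
    (f : EuclideanSpace ℝ (Fin N) → ℝ)
    (lam : ℝ) (ε : ℝ) (hε : 0 < ε) (hε1 : ε < 1)
    (u : EuclideanSpace ℝ (Fin N) → ℝ) (hu : IsSol Ω f lam u)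
    (ψ : ℝ → ℝ) (hψ : ∀ t, ψ t = 1 - (ε + (1 - ε) * (1 - t) ^ 3) ^ ((1 : ℝ) / 3))
    (v : EuclideanSpace ℝ (Fin N) → ℝ) (hv : ∀ x, v x = ψ (u x)) :
    (∀ x ∈ Ω, 0 ≤ v x ∧ v x ≤ 1 - ε ^ ((1 : ℝ) / 3)) ∧
    (∀ x ∈ frontier Ω, v x = 0) ∧
    (∀ x ∈ Ω, (1 - ε) * lam * f x / (1 - v x) ^ 2 ≤ -lap v x) := by
  obtain ⟨hu2, -, hu01, hu0, hueq⟩ := hu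
  obtain rfl : v = psi ε ∘ u := funext fun x => (hv x).trans (hψ _)
  refine ⟨fun x hx => ⟨psi_nonneg hε.le hε1.le (hu01 x hx).1 (hu01 x hx).2.le,
    psi_le hε.le hε1.le (hu01 x hx).2.le⟩, fun x hx => by simp [hu0 x hx, psi_zero], fun x hx => ?_⟩
  have hblend : ∀ {t}, t ≤ 1 → 0 < blend ε t := fun ht => hε.trans_le (le_blend hε1.le ht)
  have hux : u x < 1 := (hu01 x hx).2
  have hpsi : ∀ᶠ t in 𝓝 (u x), HasDerivAt (psi ε) (psiDeriv ε t) t :=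
    Filter.mem_of_superset (Iio_mem_nhds hux) fun t ht => hasDerivAt_psi (hblend (le_of_lt ht))
  calc (1 - ε) * lam * f x / (1 - psi ε (u x)) ^ 2 = psiDeriv ε (u x) * -lap u x := by
        rw [hueq x hx, mul_assoc, div_one_sub_psi_sq _ (hblend hux.le) hux]
    _ ≤ -lap (psi ε ∘ u) x :=
      mul_neg_lap_le_neg_lap_comp (hu2.contDiffAt (hΩo.mem_nhds hx)) hpsi
        (hasDerivAt_psiDeriv (hblend hux.le)) (psiDeriv2_nonpos hε.le hε1.le hux.le)

/-- The concave truncation `ψ_ε` turning a solution into a supersolution of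
`(S)_{(1-ε)λ}` bounded away from `1`. -/
theorem stmt11 (N : ℕ)
    (Ω : Set (EuclideanSpace ℝ (Fin N))) (hΩo : IsOpen Ω) (hΩb : Bornology.IsBounded Ω)
    (f : EuclideanSpace ℝ (Fin N) → ℝ) (hf : ContinuousOn f (closure Ω))
    (hf0 : ∀ x ∈ closure Ω, 0 ≤ f x)
    (lam : ℝ) (hlam : 0 ≤ lam) (ε : ℝ) (hε : 0 < ε) (hε1 : ε < 1)
    (u : EuclideanSpace ℝ (Fin N) → ℝ) (hu : IsSol Ω f lam u)
    (ψ : ℝ → ℝ) (hψ : ∀ t, ψ t = 1 - (ε + (1 - ε) * (1 - t) ^ 3) ^ ((1 : ℝ) / 3))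
    (v : EuclideanSpace ℝ (Fin N) → ℝ) (hv : ∀ x, v x = ψ (u x)) :
    (∀ x ∈ Ω, 0 ≤ v x ∧ v x ≤ 1 - ε ^ ((1 : ℝ) / 3)) ∧
    (∀ x ∈ frontier Ω, v x = 0) ∧
    (∀ x ∈ Ω, (1 - ε) * lam * f x / (1 - v x) ^ 2 ≤ -lap v x) :=
  stmt11_general N Ω hΩo f lam ε hε hε1 u hu ψ hψ v hv
end
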